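/- (Ehrenfeucht–Fraïssé game for GF∃.) For any finite vocabulary τ, any τ-structures 𝔄, 𝔅 with guarded tuples ā in 𝔄 and b̄ in 𝔅 of the same length, and any natural number ℓ: 𝔄,ā ≤^ℓ_GF∃ 𝔅,b̄ if and only if 𝔄,ā ⪯^ℓ_gsim 𝔅,b̄. Moreover, if 𝔄 and 𝔅 are finite, then 𝔄,ā ≤_GF∃ 𝔅,b̄ if and only if 𝔄,ā ⪯_gsim 𝔅,b̄. -/

import Mathlib

/-- A τ-structure for a vocabulary `Rel` of predicate names of arities `ar`. -/
structure GStr (Rel : Type) (ar : Rel → ℕ) (D : Type) where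
  interp : ∀ R : Rel, Set (Fin (ar R) → D)

/-- First-order formulas over the vocabulary `(Rel, ar)` (with equality), using
natural numbers as variables; `ex`/`all` quantify simultaneously over a list of
variables. -/
inductive GFO (Rel : Type) (ar : Rel → ℕ) where
  | top : GFO Rel ar
  | bot : GFO Rel ar
  | eq : ℕ → ℕ → GFO Rel ar
  | rel : (R : Rel) → (Fin (ar R) → ℕ) → GFO Rel ar
  | not : GFO Rel ar → GFO Rel ar
  | and : GFO Rel ar → GFO Rel ar → GFO Rel ar
  | or : GFO Rel ar → GFO Rel ar → GFO Rel ar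
  | imp : GFO Rel ar → GFO Rel ar → GFO Rel ar
  | ex : List ℕ → GFO Rel ar → GFO Rel ar
  | all : List ℕ → GFO Rel ar → GFO Rel ar

variable {Rel : Type} {ar : Rel → ℕ} {D D1 D2 : Type}

/-- Satisfaction of a formula in a structure under a valuation. -/
def GFO.sem (M : GStr Rel ar D) : GFO Rel ar → (ℕ → D) → Prop
  | .top, _ => True
  | .bot, _ => False
  | .eq x y, v => v x = v y
  | .rel R t, v => (fun i => v (t i)) ∈ M.interp R
  | .not φ, v => ¬ φ.sem M v
  | .and φ ψ, v => φ.sem M v ∧ ψ.sem M v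
  | .or φ ψ, v => φ.sem M v ∨ ψ.sem M v
  | .imp φ ψ, v => φ.sem M v → ψ.sem M v
  | .ex ys φ, v => ∃ w : ℕ → D, (∀ n, n ∉ ys → w n = v n) ∧ φ.sem M w
  | .all ys φ, v => ∀ w : ℕ → D, (∀ n, n ∉ ys → w n = v n) → φ.sem M w

/-- The free variables of a formula. -/
def GFO.free : GFO Rel ar → Set ℕ
  | .top | .bot => ∅
  | .eq x y => {x, y}
  | .rel _ t => Set.range t
  | .not φ => φ.free
  | .and φ ψ | .or φ ψ | .imp φ ψ => φ.free ∪ ψ.free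
  | .ex ys φ | .all ys φ => φ.free \ {n | n ∈ ys}

/-- The quantifier (nesting) depth of a formula. -/
def GFO.qdepth : GFO Rel ar → ℕ
  | .top | .bot | .eq _ _ | .rel _ _ => 0
  | .not φ => φ.qdepth
  | .and φ ψ | .or φ ψ | .imp φ ψ => max φ.qdepth ψ.qdepth
  | .ex _ φ | .all _ φ => φ.qdepth + 1

/-- Atomic formulas. -/
inductive GFO.IsAtom : GFO Rel ar → Prop
  | eq (x y : ℕ) : IsAtom (.eq x y)
  | rel (R : Rel) (t : Fin (ar R) → ℕ) : IsAtom (.rel R t)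

/-- The positive existential guarded fragment GF∃: built from atomic formulas using
∧, ∨ and guarded existential quantification `∃ȳ(G(x̄ȳ) ∧ φ(x̄ȳ))`. -/
inductive GFO.IsGFex : GFO Rel ar → Prop
  | atom {φ : GFO Rel ar} : IsAtom φ → IsGFex φ
  | and {φ ψ : GFO Rel ar} : IsGFex φ → IsGFex ψ → IsGFex (.and φ ψ)
  | or {φ ψ : GFO Rel ar} : IsGFex φ → IsGFex ψ → IsGFex (.or φ ψ)
  | ex {G φ : GFO Rel ar} (ys : List ℕ) : IsAtom G → φ.free ⊆ G.free →
      (∀ y ∈ ys, y ∈ G.free) → IsGFex φ → IsGFex (.ex ys (.and G φ))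

/-- hornGF-formulas:
`φ ::= ⊥ | ⊤ | x=y | R(x̄) | φ∧φ' | λ→φ | ∃ȳ(G(x̄ȳ)∧φ) | ∀ȳ(G(x̄ȳ)→φ)`
with `λ` in GF∃ and `G` an atomic formula containing all variables of `x̄ȳ`. -/
inductive GFO.IsHornGF : GFO Rel ar → Prop
  | bot : IsHornGF .bot
  | top : IsHornGF .top
  | eq (x y : ℕ) : IsHornGF (.eq x y)
  | rel (R : Rel) (t : Fin (ar R) → ℕ) : IsHornGF (.rel R t)
  | and {φ ψ : GFO Rel ar} : IsHornGF φ → IsHornGF ψ → IsHornGF (.and φ ψ)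
  | imp {l φ : GFO Rel ar} : IsGFex l → IsHornGF φ → IsHornGF (.imp l φ)
  | ex {G φ : GFO Rel ar} (ys : List ℕ) : IsAtom G → φ.free ⊆ G.free →
      (∀ y ∈ ys, y ∈ G.free) → IsHornGF φ → IsHornGF (.ex ys (.and G φ))
  | all {G φ : GFO Rel ar} (ys : List ℕ) : IsAtom G → φ.free ⊆ G.free →
      (∀ y ∈ ys, y ∈ G.free) → IsHornGF φ → IsHornGF (.all ys (.imp G φ))

/-- Disjunctions of negations of atoms. -/
inductive GFO.IsNegClause : GFO Rel ar → Prop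
  | neg {φ : GFO Rel ar} : IsAtom φ → IsNegClause (.not φ)
  | or {φ ψ : GFO Rel ar} : IsNegClause φ → IsNegClause ψ → IsNegClause (.or φ ψ)

/-- Basic Horn formulas: disjunctions of formulas at most one of which is an atom and
the remaining ones negations of atoms. -/
inductive GFO.IsBasicHorn : GFO Rel ar → Prop
  | pos {φ : GFO Rel ar} : IsAtom φ → IsBasicHorn φ
  | neg {φ : GFO Rel ar} : IsNegClause φ → IsBasicHorn φ
  | orL {φ ψ : GFO Rel ar} : IsNegClause φ → IsBasicHorn ψ → IsBasicHorn (.or φ ψ)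
  | orR {φ ψ : GFO Rel ar} : IsBasicHorn φ → IsNegClause ψ → IsBasicHorn (.or φ ψ)

/-- Horn formulas: constructed from basic Horn formulas using ∧, ∃ and ∀. -/
inductive GFO.IsHornFO : GFO Rel ar → Prop
  | basic {φ : GFO Rel ar} : IsBasicHorn φ → IsHornFO φ
  | and {φ ψ : GFO Rel ar} : IsHornFO φ → IsHornFO ψ → IsHornFO (.and φ ψ)
  | ex (ys : List ℕ) {φ : GFO Rel ar} : IsHornFO φ → IsHornFO (.ex ys φ)
  | all (ys : List ℕ) {φ : GFO Rel ar} : IsHornFO φ → IsHornFO (.all ys φ)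

/-- A tuple is guarded if its set of components is a singleton or the set of components
of some tuple in the interpretation of a predicate. -/
def IsGuardedTup (M : GStr Rel ar D) {n : ℕ} (t : Fin n → D) : Prop :=
  (∃ a : D, Set.range t = {a}) ∨
  ∃ (R : Rel) (c : Fin (ar R) → D), c ∈ M.interp R ∧ Set.range t = Set.range c

/-- `ā ↦ b̄` is a well-defined map `[ā] → [b̄]` that is a homomorphism from `𝔄|_[ā]`
to `𝔅|_[b̄]`. -/
def TupHom (M : GStr Rel ar D1) (N : GStr Rel ar D2) {n : ℕ}
    (a : Fin n → D1) (b : Fin n → D2) : Prop :=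
  (∀ i j : Fin n, a i = a j → b i = b j) ∧
  ∀ (R : Rel) (σ : Fin (ar R) → Fin n), (a ∘ σ) ∈ M.interp R → (b ∘ σ) ∈ N.interp R

/-- `𝔄 ⊨ φ(ā)`: satisfaction of a formula at a tuple (interpreting variable `i` as the
`i`-th component, for `i` below the length of the tuple). -/
def satTup (M : GStr Rel ar D) (φ : GFO Rel ar) {n : ℕ} (t : Fin n → D) : Prop :=
  ∀ v : ℕ → D, (∀ i : Fin n, v i.val = t i) → φ.sem M v

/-- `Z` is a guarded simulation between `M` and `N`. -/
def IsGSim (M : GStr Rel ar D1) (N : GStr Rel ar D2)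
    (Z : Set (Σ n : ℕ, (Fin n → D1) × (Fin n → D2))) : Prop :=
  ∀ q ∈ Z,
    IsGuardedTup M q.2.1 ∧ IsGuardedTup N q.2.2 ∧ TupHom M N q.2.1 q.2.2 ∧
    ∀ (m : ℕ) (a' : Fin m → D1), IsGuardedTup M a' →
      ∃ b' : Fin m → D2,
        (⟨m, a', b'⟩ : Σ n : ℕ, (Fin n → D1) × (Fin n → D2)) ∈ Z ∧
        ∀ (i : Fin q.1) (j : Fin m), q.2.1 i = a' j → q.2.2 i = b' j

/-- `𝔄,ā ⪯_gsim 𝔅,b̄`: some guarded simulation contains `ā ↦ b̄`. -/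
def GSim (M : GStr Rel ar D1) (N : GStr Rel ar D2) {n : ℕ}
    (a : Fin n → D1) (b : Fin n → D2) : Prop :=
  ∃ Z, IsGSim M N Z ∧ (⟨n, a, b⟩ : Σ n : ℕ, (Fin n → D1) × (Fin n → D2)) ∈ Z

/-- The ℓ-round guarded simulation relations `⪯^ℓ_gsim`. -/
def GSimL (M : GStr Rel ar D1) (N : GStr Rel ar D2) :
    ℕ → (Σ n : ℕ, (Fin n → D1) × (Fin n → D2)) → Prop
  | 0 => fun q => TupHom M N q.2.1 q.2.2
  | ℓ + 1 => fun q =>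
      TupHom M N q.2.1 q.2.2 ∧
      ∀ (m : ℕ) (a' : Fin m → D1), IsGuardedTup M a' →
        ∃ b' : Fin m → D2, IsGuardedTup N b' ∧
          GSimL M N ℓ ⟨m, a', b'⟩ ∧
          ∀ (i : Fin q.1) (j : Fin m), q.2.1 i = a' j → q.2.2 i = b' j

/-- `𝔄,ā ≤^ℓ_GF∃ 𝔅,b̄`. -/
def leGFexDepth (M : GStr Rel ar D1) (N : GStr Rel ar D2) (ℓ : ℕ) {n : ℕ}
    (a : Fin n → D1) (b : Fin n → D2) : Prop :=
  ∀ φ : GFO Rel ar, φ.IsGFex → φ.qdepth ≤ ℓ → φ.free ⊆ {m : ℕ | m < n} →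
    satTup M φ a → satTup N φ b

/-- `𝔄,ā ≤_GF∃ 𝔅,b̄`. -/
def leGFex (M : GStr Rel ar D1) (N : GStr Rel ar D2) {n : ℕ}
    (a : Fin n → D1) (b : Fin n → D2) : Prop :=
  ∀ φ : GFO Rel ar, φ.IsGFex → φ.free ⊆ {m : ℕ | m < n} →
    satTup M φ a → satTup N φ b


/-!
A guarded simulation preserves GF∃-formulas, by induction on the formula: a guarded
quantifier `∃ȳ (G ∧ φ)` is met by playing the tuple of values of the variables of `G` as a
challenge. Conversely, over a finite vocabulary a tuple has only finitely many `ℓ`-round types,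
so the `ℓ`-type of `ā` is expressed by one GF∃-formula of depth `ℓ`: the conjunction of the
atoms `ā` satisfies and, for every challenge `ā` realizes, a guarded existential over the new
positions of the challenge followed by the `(ℓ-1)`-type of the challenge tuple. A tuple `b̄`
satisfying this formula survives `ℓ` rounds. If `𝔅` is finite, the answers in the forth
condition range over a finite set, so an answer that is good for infinitely many `ℓ` is good
for all of them; hence "`⪯^ℓ_gsim` for all `ℓ`" is itself a guarded simulation.
-/

namespace GFO

/-- The singleton case avoids a trailing `⊤`, which is not a GF∃-formula. -/
def conj : List (GFO Rel ar) → GFO Rel ar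
  | [] => .top
  | [φ] => φ
  | φ :: ψ :: l => .and φ (conj (ψ :: l))

theorem sem_conj (M : GStr Rel ar D) (v : ℕ → D) :
    ∀ l : List (GFO Rel ar), (conj l).sem M v ↔ ∀ φ ∈ l, φ.sem M v
  | [] => by simp [conj, sem]
  | [φ] => by simp [conj]
  | φ :: ψ :: l => by simp [conj, sem, sem_conj M v (ψ :: l)]

theorem free_conj_subset {S : Set ℕ} :
    ∀ l : List (GFO Rel ar), (∀ φ ∈ l, φ.free ⊆ S) → (conj l).free ⊆ S
  | [] => by simp [conj, free]
  | [φ] => by simp [conj]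
  | φ :: ψ :: l => by
      intro h
      exact Set.union_subset (h φ (by simp))
        (free_conj_subset (ψ :: l) fun χ hχ => h χ (List.mem_cons_of_mem φ hχ))

theorem qdepth_conj_le {d : ℕ} :
    ∀ l : List (GFO Rel ar), (∀ φ ∈ l, φ.qdepth ≤ d) → (conj l).qdepth ≤ d
  | [] => by simp [conj, qdepth]
  | [φ] => by simp [conj]
  | φ :: ψ :: l => by
      intro h
      exact max_le (h φ (by simp))
        (qdepth_conj_le (ψ :: l) fun χ hχ => h χ (List.mem_cons_of_mem φ hχ))

theorem IsGFex.conj :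
    ∀ l : List (GFO Rel ar), l ≠ [] → (∀ φ ∈ l, φ.IsGFex) → (GFO.conj l).IsGFex
  | [φ], _ => by simp [GFO.conj]
  | φ :: ψ :: l, _ => by
      intro h
      exact (h φ (by simp)).and
        (IsGFex.conj (ψ :: l) (by simp) fun χ hχ => h χ (List.mem_cons_of_mem φ hχ))

end GFO

section Simulation

variable {M : GStr Rel ar D1} {N : GStr Rel ar D2}

theorem GSimL.tupHom : ∀ {ℓ q}, GSimL M N ℓ q → TupHom M N q.2.1 q.2.2
  | 0, _, h => h
  | _ + 1, _, h => h.1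

theorem GSimL.of_succ : ∀ {ℓ q}, GSimL M N (ℓ + 1) q → GSimL M N ℓ q
  | 0, _, h => h.1
  | _ + 1, _, h => ⟨h.1, fun m a' ha' =>
      let ⟨b', hb', hsim, hag⟩ := h.2 m a' ha'
      ⟨b', hb', hsim.of_succ, hag⟩⟩

theorem antitone_gSimL : Antitone (GSimL M N) :=
  antitone_nat_of_succ_le fun _ _ => GSimL.of_succ

theorem TupHom.comp {m k : ℕ} {c : Fin m → D1} {d : Fin m → D2} (h : TupHom M N c d)
    (σ : Fin k → Fin m) : TupHom M N (c ∘ σ) (d ∘ σ) :=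
  ⟨fun i j hij => h.1 (σ i) (σ j) hij, fun R τ hin => h.2 R (σ ∘ τ) hin⟩

theorem GSimL.comp {m k : ℕ} {c : Fin m → D1} {d : Fin m → D2} (σ : Fin k → Fin m) :
    ∀ {ℓ}, GSimL M N ℓ ⟨m, c, d⟩ → GSimL M N ℓ ⟨k, c ∘ σ, d ∘ σ⟩
  | 0, h => TupHom.comp h σ
  | _ + 1, h => ⟨h.1.comp σ, fun m' a' ha' =>
      let ⟨b', hb', hsim, hag⟩ := h.2 m' a' ha'
      ⟨b', hb', hsim, fun i j => hag (σ i) j⟩⟩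

theorem IsGSim.gSimL {Z} (hZ : IsGSim M N Z) : ∀ ℓ, ∀ q ∈ Z, GSimL M N ℓ q
  | 0, q, hq => (hZ q hq).2.2.1
  | ℓ + 1, q, hq => ⟨(hZ q hq).2.2.1, fun m a' ha' =>
      let ⟨b', hb'Z, hag⟩ := (hZ q hq).2.2.2 m a' ha'
      ⟨b', (hZ _ hb'Z).2.1, IsGSim.gSimL hZ ℓ _ hb'Z, hag⟩⟩

end Simulation

section Guards

/-- The guards of challenges: `none` is the guard `x = x` of a single element, `some R` is
`R(x̄)`. -/
abbrev guardArity (ar : Rel → ℕ) : Option Rel → ℕ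
  | none => 1
  | some R => ar R

def guardAtom : (k : Option Rel) → (Fin (guardArity ar k) → ℕ) → GFO Rel ar
  | none, x => .eq (x 0) (x 0)
  | some R, x => .rel R x

def IsGuard (M : GStr Rel ar D) : (k : Option Rel) → (Fin (guardArity ar k) → D) → Prop
  | none, _ => True
  | some R, t => t ∈ M.interp R

theorem isAtom_guardAtom : ∀ k x, (guardAtom k x : GFO Rel ar).IsAtom
  | none, _ => .eq _ _
  | some R, _ => .rel R _

theorem free_guardAtom : ∀ k x, (guardAtom k x : GFO Rel ar).free = Set.range x
  | none, x => by simp [guardAtom, GFO.free, Set.range_unique]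
  | some _, _ => rfl

theorem qdepth_guardAtom : ∀ k x, (guardAtom k x : GFO Rel ar).qdepth = 0
  | none, _ => rfl
  | some _, _ => rfl

theorem sem_guardAtom (M : GStr Rel ar D) (w : ℕ → D) :
    ∀ k x, (guardAtom k x).sem M w ↔ IsGuard M k (w ∘ x)
  | none, _ => by simp [guardAtom, IsGuard, GFO.sem]
  | some _, _ => Iff.rfl

theorem IsGuard.isGuardedTup {M : GStr Rel ar D} :
    ∀ {k t}, IsGuard M k t → IsGuardedTup M t
  | none, t, _ => .inl ⟨t 0, Set.range_unique⟩
  | some R, t, ht => .inr ⟨R, t, ht, rfl⟩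

theorem IsGuardedTup.exists_guard {M : GStr Rel ar D} {m : ℕ} {a : Fin m → D}
    (ha : IsGuardedTup M a) : ∃ k t, IsGuard M k t ∧ Set.range a = Set.range t := by
  rcases ha with ⟨e, he⟩ | ⟨R, t, ht, he⟩
  · exact ⟨none, fun _ => e, trivial, by rw [he, Set.range_const]⟩
  · exact ⟨some R, t, ht, he⟩

end Guards

section Forth

variable {M : GStr Rel ar D1} {N : GStr Rel ar D2}

theorem exists_answer_of_range_eq {ℓ m m' k : ℕ} {c : Fin m → D1} {d : Fin m → D2}
    {t : Fin m' → D1} {u : Fin m' → D2} {a' : Fin k → D1} (hu : IsGuardedTup N u)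
    (htu : GSimL M N ℓ ⟨m', t, u⟩) (hag : ∀ i j, c i = t j → d i = u j)
    (ha' : Set.range a' = Set.range t) :
    ∃ b', IsGuardedTup N b' ∧ GSimL M N ℓ ⟨k, a', b'⟩ ∧ ∀ i j, c i = a' j → d i = b' j := by
  obtain ⟨κ, rfl⟩ : ∃ κ : Fin k → Fin m', t ∘ κ = a' := by
    choose κ hκ using fun j => (ha' ▸ Set.mem_range_self j : a' j ∈ Set.range t)
    exact ⟨κ, funext hκ⟩
  have hrange : Set.range (u ∘ κ) = Set.range u := by
    refine (Set.range_comp_subset_range κ u).antisymm ?_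
    rintro _ ⟨j, rfl⟩
    obtain ⟨i, hi⟩ : t j ∈ Set.range (t ∘ κ) := ha' ▸ Set.mem_range_self j
    exact ⟨i, htu.tupHom.1 _ _ hi⟩
  refine ⟨u ∘ κ, ?_, htu.comp κ, fun i j h => hag i (κ j) h⟩
  unfold IsGuardedTup at hu ⊢
  rwa [hrange]

theorem gSimL_succ_of_forall_guard {ℓ m : ℕ} {c : Fin m → D1} {d : Fin m → D2}
    (hcd : TupHom M N c d)
    (H : ∀ k t, IsGuard M k t → ∃ u, IsGuard N k u ∧
      GSimL M N ℓ ⟨guardArity ar k, t, u⟩ ∧ ∀ i j, c i = t j → d i = u j) :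
    GSimL M N (ℓ + 1) ⟨m, c, d⟩ := by
  refine ⟨hcd, fun m' a' ha' => ?_⟩
  obtain ⟨k, t, ht, hrange⟩ := ha'.exists_guard
  obtain ⟨u, hu, htu, hag⟩ := H k t ht
  exact exists_answer_of_range_eq hu.isGuardedTup htu hag hrange

end Forth

section Forward

variable {M : GStr Rel ar D1} {N : GStr Rel ar D2}

theorem GFO.IsAtom.sem_of_tupHom {G : GFO Rel ar} (hG : G.IsAtom) {m : ℕ}
    {c : Fin m → D1} {d : Fin m → D2} (hcd : TupHom M N c d) {vM : ℕ → D1} {vN : ℕ → D2}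
    (hv : ∀ x ∈ G.free, ∃ i, vM x = c i ∧ vN x = d i) (h : G.sem M vM) : G.sem N vN := by
  cases hG with
  | eq x y =>
    obtain ⟨i, hxM, hxN⟩ := hv x (by simp [GFO.free])
    obtain ⟨j, hyM, hyN⟩ := hv y (by simp [GFO.free])
    show vN x = vN y
    rw [hxN, hyN]
    exact hcd.1 i j (hxM ▸ hyM ▸ h)
  | rel R t =>
    choose σ hσM hσN using fun k => hv (t k) ⟨k, rfl⟩
    have hcσ : c ∘ σ = fun k => vM (t k) := funext fun k => (hσM k).symm
    have hdσ : d ∘ σ = fun k => vN (t k) := funext fun k => (hσN k).symm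
    show (fun k => vN (t k)) ∈ N.interp R
    rw [← hdσ]
    exact hcd.2 R σ (hcσ ▸ h)

theorem GFO.IsAtom.exists_range_eq_free {G : GFO Rel ar} (hG : G.IsAtom) :
    ∃ m, ∃ t : Fin m → ℕ, Set.range t = G.free := by
  cases hG with
  | eq x y => exact ⟨2, ![x, y], Matrix.range_cons_cons_empty x y ![]⟩
  | rel R t => exact ⟨_, t, rfl⟩

theorem GFO.IsAtom.isGuardedTup_comp {G : GFO Rel ar} (hG : G.IsAtom) {m : ℕ}
    {t : Fin m → ℕ} (ht : Set.range t = G.free) {w : ℕ → D1} (hw : G.sem M w) :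
    IsGuardedTup M (w ∘ t) := by
  cases hG with
  | eq x y =>
    have hxy : w x = w y := hw
    exact .inl ⟨w x, by simp [Set.range_comp, ht, GFO.free, Set.image_pair, hxy]⟩
  | rel R s => exact .inr ⟨R, w ∘ s, hw, by rw [Set.range_comp, Set.range_comp, ht]; rfl⟩

theorem sem_guardedEx_of_gSimL {ℓ m : ℕ} {c : Fin m → D1} {d : Fin m → D2}
    {G φ : GFO Rel ar} {ys : List ℕ} (hG : G.IsAtom) (hsub : φ.free ⊆ G.free)
    (hsim : GSimL M N (ℓ + 1) ⟨m, c, d⟩)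
    (hφ : ∀ {k} {c' : Fin k → D1} {d' : Fin k → D2}, GSimL M N ℓ ⟨k, c', d'⟩ →
      ∀ {vM vN}, (∀ x ∈ φ.free, ∃ i, vM x = c' i ∧ vN x = d' i) → φ.sem M vM → φ.sem N vN)
    {vM : ℕ → D1} {vN : ℕ → D2}
    (hv : ∀ x ∈ (GFO.ex ys (.and G φ)).free, ∃ i, vM x = c i ∧ vN x = d i)
    (h : (GFO.ex ys (.and G φ)).sem M vM) : (GFO.ex ys (.and G φ)).sem N vN := by
  obtain ⟨w, hw, hGw, hφw⟩ := h
  obtain ⟨k, t, ht⟩ := hG.exists_range_eq_free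
  obtain ⟨b', -, hsim', hag⟩ := hsim.2 k (w ∘ t) (hG.isGuardedTup_comp ht hGw)
  have hfac : b'.FactorsThrough t := fun i j hij => hsim'.tupHom.1 i j (congrArg w hij)
  have hvars : ∀ x ∈ G.free, ∃ j, w x = (w ∘ t) j ∧ Function.extend t b' vN x = b' j := by
    rw [← ht]
    rintro _ ⟨j, rfl⟩
    exact ⟨j, rfl, hfac.extend_apply vN j⟩
  refine ⟨Function.extend t b' vN, fun x hx => ?_, hG.sem_of_tupHom hsim'.tupHom hvars hGw,
    hφ hsim' (fun x hx => hvars x (hsub hx)) hφw⟩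
  by_cases hxt : ∃ j, t j = x
  · obtain ⟨j, rfl⟩ := hxt
    obtain ⟨i, hiM, hiN⟩ := hv (t j) ⟨.inl (ht ▸ ⟨j, rfl⟩), hx⟩
    rw [hfac.extend_apply, hiN]
    exact (hag i j (show c i = w (t j) by rw [← hiM, ← hw _ hx])).symm
  · exact Function.extend_apply' _ _ _ hxt

theorem GFO.IsGFex.sem_of_gSimL {φ : GFO Rel ar} (hφ : φ.IsGFex) :
    ∀ {ℓ m} {c : Fin m → D1} {d : Fin m → D2}, φ.qdepth ≤ ℓ → GSimL M N ℓ ⟨m, c, d⟩ →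
      ∀ {vM vN}, (∀ x ∈ φ.free, ∃ i, vM x = c i ∧ vN x = d i) → φ.sem M vM → φ.sem N vN := by
  induction hφ with
  | atom hG => exact fun _ hsim _ _ hv => hG.sem_of_tupHom hsim.tupHom hv
  | and _ _ ih₁ ih₂ =>
    intro ℓ m c d hq hsim vM vN hv h
    exact ⟨ih₁ (le_of_max_le_left hq) hsim (fun x hx => hv x (.inl hx)) h.1,
      ih₂ (le_of_max_le_right hq) hsim (fun x hx => hv x (.inr hx)) h.2⟩
  | or _ _ ih₁ ih₂ =>
    intro ℓ m c d hq hsim vM vN hv h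
    exact h.imp (ih₁ (le_of_max_le_left hq) hsim fun x hx => hv x (.inl hx))
      (ih₂ (le_of_max_le_right hq) hsim fun x hx => hv x (.inr hx))
  | @ex G φ ys hG hsub _ _ ih =>
    intro ℓ m c d hq hsim vM vN hv h
    have hq' : φ.qdepth + 1 ≤ ℓ := by cases hG <;> simpa [GFO.qdepth] using hq
    exact sem_guardedEx_of_gSimL hG hsub (antitone_gSimL hq' _ hsim) (ih le_rfl) hv h

theorem exists_valuation_extending [Nonempty D] {n : ℕ} (a : Fin n → D) :
    ∃ v : ℕ → D, ∀ i : Fin n, v i = a i :=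
  ⟨Function.extend Fin.val a fun _ => Classical.arbitrary D,
    Fin.val_injective.extend_apply a _⟩

theorem leGFexDepth_of_gSimL [Nonempty D1] {ℓ n : ℕ} {a : Fin n → D1} {b : Fin n → D2}
    (h : GSimL M N ℓ ⟨n, a, b⟩) : leGFexDepth M N ℓ a b := by
  intro φ hφ hq hfree hsat vN hvN
  obtain ⟨vM, hvM⟩ := exists_valuation_extending a
  refine hφ.sem_of_gSimL hq h (fun x hx => ?_) (hsat vM hvM)
  exact ⟨⟨x, hfree hx⟩, hvM ⟨x, hfree hx⟩, hvN ⟨x, hfree hx⟩⟩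

theorem leGFex_iff_forall_leGFexDepth {n : ℕ} {a : Fin n → D1} {b : Fin n → D2} :
    leGFex M N a b ↔ ∀ ℓ, leGFexDepth M N ℓ a b :=
  ⟨fun h _ φ hφ _ => h φ hφ, fun h φ hφ => h φ.qdepth φ hφ le_rfl⟩

end Forward

noncomputable def Set.toList {α : Type*} [Finite α] (s : Set α) : List α :=
  (Set.toFinite s).toFinset.toList

@[simp]
theorem Set.mem_toList {α : Type*} [Finite α] {s : Set α} {a : α} : a ∈ s.toList ↔ a ∈ s := by
  simp [Set.toList]

section Atoms

abbrev AtomIdx (Rel : Type) (ar : Rel → ℕ) (m : ℕ) : Type :=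
  (Fin m × Fin m) ⊕ (Σ R : Rel, Fin (ar R) → Fin m)

def atomAt {m : ℕ} (x : Fin m → ℕ) : AtomIdx Rel ar m → GFO Rel ar
  | .inl (i, j) => .eq (x i) (x j)
  | .inr ⟨R, σ⟩ => .rel R (x ∘ σ)

def HoldsAt (M : GStr Rel ar D) {m : ℕ} (c : Fin m → D) : AtomIdx Rel ar m → Prop
  | .inl (i, j) => c i = c j
  | .inr ⟨R, σ⟩ => c ∘ σ ∈ M.interp R

variable {m : ℕ}

theorem sem_atomAt (M : GStr Rel ar D) (v : ℕ → D) (x : Fin m → ℕ) :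
    ∀ α, (atomAt x α).sem M v ↔ HoldsAt M (v ∘ x) α
  | .inl _ => Iff.rfl
  | .inr _ => Iff.rfl

theorem free_atomAt_subset (x : Fin m → ℕ) :
    ∀ α : AtomIdx Rel ar m, (atomAt x α).free ⊆ Set.range x
  | .inl (i, j) => by simp [atomAt, GFO.free, Set.insert_subset_iff]
  | .inr ⟨_, σ⟩ => Set.range_comp_subset_range σ x

theorem qdepth_atomAt (x : Fin m → ℕ) : ∀ α : AtomIdx Rel ar m, (atomAt x α).qdepth = 0
  | .inl _ => rfl
  | .inr _ => rfl

theorem isGFex_atomAt (x : Fin m → ℕ) : ∀ α : AtomIdx Rel ar m, (atomAt x α).IsGFex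
  | .inl _ => .atom (.eq _ _)
  | .inr _ => .atom (.rel _ _)

theorem tupHom_of_holdsAt {M : GStr Rel ar D1} {N : GStr Rel ar D2} {c : Fin m → D1}
    {d : Fin m → D2} (h : ∀ α, HoldsAt M c α → HoldsAt N d α) : TupHom M N c d :=
  ⟨fun i j => h (.inl (i, j)), fun R σ => h (.inr ⟨R, σ⟩)⟩

theorem IsGuardedTup.exists_holdsAt {M : GStr Rel ar D} {c : Fin m → D}
    (hc : IsGuardedTup M c) : ∃ α, HoldsAt M c α := by
  rcases hc with ⟨e, he⟩ | ⟨R, t, ht, he⟩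
  · obtain ⟨i, -⟩ : e ∈ Set.range c := he ▸ rfl
    exact ⟨.inl (i, i), rfl⟩
  · choose σ hσ using fun k => (he ▸ Set.mem_range_self k : t k ∈ Set.range c)
    exact ⟨.inr ⟨R, σ⟩, show c ∘ σ ∈ M.interp R from (funext hσ : c ∘ σ = t) ▸ ht⟩

end Atoms

section Challenges

/-- A challenge to a tuple of length `m`: the guard of a new guarded tuple, for each of its
positions the position of the old tuple it repeats (if any), and the type of the new tuple. -/
abbrev Challenge (Rel : Type) (ar : Rel → ℕ) (T : ℕ → Type) (m : ℕ) : Type :=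
  Σ k : Option Rel, (Fin (guardArity ar k) → Option (Fin m)) × T (guardArity ar k)

open Classical in
noncomputable def glue {m m' : ℕ} (c : Fin m → D) (t : Fin m' → D) (j : Fin m') :
    Option (Fin m) :=
  if h : ∃ i, c i = t j then some h.choose else none

def challengeVars {m m' : ℕ} (x : Fin m → ℕ) (fr : ℕ) (g : Fin m' → Option (Fin m))
    (j : Fin m') : ℕ :=
  (g j).elim (fr + j) x

def freshVars {m m' : ℕ} (fr : ℕ) (g : Fin m' → Option (Fin m)) : List ℕ :=
  ((List.finRange m').filter fun j => (g j).isNone).map (fr + ·)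

def challengeFormula {T : ℕ → Type} (F : ∀ {k}, T k → (Fin k → ℕ) → ℕ → GFO Rel ar) {m : ℕ}
    (x : Fin m → ℕ) (fr : ℕ) : Challenge Rel ar T m → GFO Rel ar
  | ⟨k, g, τ⟩ => .ex (freshVars fr g)
      (.and (guardAtom k (challengeVars x fr g))
        (F τ (challengeVars x fr g) (fr + guardArity ar k)))

variable {m m' : ℕ}

theorem glue_eq_some {c : Fin m → D} {t : Fin m' → D} {j : Fin m'} {i : Fin m}
    (h : glue c t j = some i) : c i = t j := by
  unfold glue at h
  split_ifs at h with hex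
  exact Option.some_injective _ h ▸ hex.choose_spec

theorem exists_glue_eq_some {c : Fin m → D} {t : Fin m' → D} {j : Fin m'} {i : Fin m}
    (h : c i = t j) : ∃ i', glue c t j = some i' := by
  simp [glue, dif_pos (⟨i, h⟩ : ∃ i, c i = t j)]

theorem mem_freshVars {fr z : ℕ} {g : Fin m' → Option (Fin m)} :
    z ∈ freshVars fr g ↔ ∃ j, g j = none ∧ fr + j = z := by
  simp [freshVars]

theorem not_mem_freshVars_of_lt {fr z : ℕ} {g : Fin m' → Option (Fin m)} (hz : z < fr) :
    z ∉ freshVars fr g := by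
  rw [mem_freshVars]
  omega

theorem challengeVars_lt {x : Fin m → ℕ} {fr : ℕ} (hx : ∀ i, x i < fr)
    (g : Fin m' → Option (Fin m)) (j : Fin m') : challengeVars x fr g j < fr + m' := by
  unfold challengeVars
  cases g j with
  | none => simp
  | some i => simpa using (hx i).trans_le (Nat.le_add_right fr m')

theorem challengeVars_glue_inj {c : Fin m → D} {t : Fin m' → D} {x : Fin m → ℕ} {fr : ℕ}
    (hxc : ∀ i j, x i = x j → c i = c j) (hx : ∀ i, x i < fr) {i j : Fin m'}
    (h : challengeVars x fr (glue c t) i = challengeVars x fr (glue c t) j) : t i = t j := by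
  unfold challengeVars at h
  rcases hi : glue c t i with _ | i' <;> rcases hj : glue c t j with _ | j' <;>
    simp only [hi, hj, Option.elim_none, Option.elim_some] at h
  · rw [Fin.ext (Nat.add_left_cancel h)]
  · exact absurd h (by have := hx j'; omega)
  · exact absurd h (by have := hx i'; omega)
  · rw [← glue_eq_some hi, ← glue_eq_some hj, hxc i' j' h]

theorem range_challengeVars_diff_subset (x : Fin m → ℕ) (fr : ℕ)
    (g : Fin m' → Option (Fin m)) :
    Set.range (challengeVars x fr g) \ {z | z ∈ freshVars fr g} ⊆ Set.range x := by
  rintro _ ⟨⟨j, rfl⟩, hfresh⟩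
  unfold challengeVars at hfresh ⊢
  cases hj : g j with
  | none => exact absurd (mem_freshVars.2 ⟨j, hj, by simp [hj]⟩) hfresh
  | some i => exact ⟨i, by simp⟩

theorem freshVars_subset_range (fr : ℕ) (x : Fin m → ℕ) (g : Fin m' → Option (Fin m)) :
    ∀ z ∈ freshVars fr g, z ∈ Set.range (challengeVars x fr g) := by
  intro z hz
  obtain ⟨j, hj, rfl⟩ := mem_freshVars.1 hz
  exact ⟨j, by simp [challengeVars, hj]⟩

theorem exists_extension_challengeVars {x : Fin m → ℕ} {fr : ℕ} (hx : ∀ i, x i < fr)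
    (v : ℕ → D) (t : Fin m' → D) :
    ∃ w : ℕ → D, (∀ z ∉ freshVars fr (glue (v ∘ x) t), w z = v z) ∧
      w ∘ challengeVars x fr (glue (v ∘ x) t) = t := by
  have hfac : t.FactorsThrough (challengeVars x fr (glue (v ∘ x) t)) := fun i j =>
    challengeVars_glue_inj (fun i j h => congrArg v h) hx
  refine ⟨Function.extend _ t v, fun z hz => ?_, funext (hfac.extend_apply v)⟩
  by_cases hzy : ∃ j, challengeVars x fr (glue (v ∘ x) t) j = z
  · obtain ⟨j, rfl⟩ := hzy
    rw [hfac.extend_apply]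
    unfold challengeVars at hz ⊢
    cases hj : glue (v ∘ x) t j with
    | none => exact absurd (mem_freshVars.2 ⟨j, hj, by simp [hj]⟩) hz
    | some i => exact (glue_eq_some hj).symm
  · exact Function.extend_apply' _ _ _ hzy

end Challenges

section Types

/-- Finite codes for the `ℓ`-round behaviour of `m`-tuples: the atoms they satisfy and the
challenges they realize. -/
def GType (Rel : Type) (ar : Rel → ℕ) : ℕ → ℕ → Type
  | 0, m => Set (AtomIdx Rel ar m)
  | ℓ + 1, m => Set (AtomIdx Rel ar m) × Set (Challenge Rel ar (GType Rel ar ℓ) m)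

theorem finite_gType [Finite Rel] (ℓ : ℕ) : ∀ m, Finite (GType Rel ar ℓ m) := by
  induction ℓ with
  | zero => exact fun m => inferInstanceAs (Finite (Set (AtomIdx Rel ar m)))
  | succ ℓ ih =>
    exact fun m => inferInstanceAs
      (Finite (Set (AtomIdx Rel ar m) × Set (Challenge Rel ar (GType Rel ar ℓ) m)))

instance [Finite Rel] (ℓ m : ℕ) : Finite (GType Rel ar ℓ m) := finite_gType ℓ m

noncomputable def gType (M : GStr Rel ar D) : (ℓ : ℕ) → {m : ℕ} → (Fin m → D) → GType Rel ar ℓ m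
  | 0, _, c => {α | HoldsAt M c α}
  | ℓ + 1, _, c => ({α | HoldsAt M c α},
      {χ | ∃ t, IsGuard M χ.1 t ∧ glue c t = χ.2.1 ∧ gType M ℓ t = χ.2.2})

/-- The variables from `fr` on are reserved for the positions introduced by challenges. -/
noncomputable def typeFormula [Finite Rel] :
    (ℓ : ℕ) → {m : ℕ} → GType Rel ar ℓ m → (Fin m → ℕ) → ℕ → GFO Rel ar
  | 0, _, τ, x, _ => GFO.conj (τ.toList.map (atomAt x))
  | ℓ + 1, _, τ, x, fr => GFO.conj (τ.1.toList.map (atomAt x) ++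
      τ.2.toList.map (challengeFormula (typeFormula ℓ) x fr))

variable [Finite Rel]

theorem free_typeFormula_subset :
    ∀ ℓ {m} (τ : GType Rel ar ℓ m) x fr, (typeFormula ℓ τ x fr).free ⊆ Set.range x
  | 0, _, _, x, _ =>
    GFO.free_conj_subset _ (List.forall_mem_map.2 fun α _ => free_atomAt_subset x α)
  | ℓ + 1, _, _, x, fr => by
    refine GFO.free_conj_subset _ ?_
    simp only [List.forall_mem_append, List.forall_mem_map]
    refine ⟨fun α _ => free_atomAt_subset x α, fun ⟨k, g, τ⟩ _ => ?_⟩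
    refine subset_trans ?_ (range_challengeVars_diff_subset x fr g)
    refine Set.sdiff_subset_sdiff_left (Set.union_subset ?_ (free_typeFormula_subset ℓ τ _ _))
    exact (free_guardAtom k _).subset

theorem qdepth_typeFormula_le :
    ∀ ℓ {m} (τ : GType Rel ar ℓ m) x fr, (typeFormula ℓ τ x fr).qdepth ≤ ℓ
  | 0, _, _, x, _ => GFO.qdepth_conj_le _ (List.forall_mem_map.2 fun α _ => (qdepth_atomAt x α).le)
  | ℓ + 1, _, _, x, fr => by
    refine GFO.qdepth_conj_le _ ?_
    simp only [List.forall_mem_append, List.forall_mem_map, qdepth_atomAt]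
    refine ⟨fun _ _ => Nat.zero_le _, fun ⟨k, g, τ⟩ _ => ?_⟩
    simpa [challengeFormula, GFO.qdepth, qdepth_guardAtom] using
      qdepth_typeFormula_le ℓ τ (challengeVars x fr g) (fr + guardArity ar k)

theorem isGFex_typeFormula_gType (M : GStr Rel ar D) :
    ∀ ℓ {m} {c : Fin m → D}, IsGuardedTup M c → ∀ x fr, (typeFormula ℓ (gType M ℓ c) x fr).IsGFex
  | 0, _, _, hc, x, _ => by
    obtain ⟨α, hα⟩ := hc.exists_holdsAt
    simp only [typeFormula]
    refine GFO.IsGFex.conj _ (List.ne_nil_of_mem (List.mem_map_of_mem (f := atomAt x) (a := α) ?_))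
      (List.forall_mem_map.2 fun α _ => isGFex_atomAt x α)
    simpa [gType] using hα
  | ℓ + 1, _, c, hc, x, fr => by
    obtain ⟨α, hα⟩ := hc.exists_holdsAt
    simp only [typeFormula]
    refine GFO.IsGFex.conj _ (List.ne_nil_of_mem (List.mem_append_left _
      (List.mem_map_of_mem (f := atomAt x) (a := α) ?_))) ?_
    · simpa [gType] using hα
    simp only [List.forall_mem_append, List.forall_mem_map]
    refine ⟨fun α _ => isGFex_atomAt x α, fun ⟨k, g, τ⟩ hχ => ?_⟩
    obtain ⟨t, ht, -, rfl⟩ : ∃ t, IsGuard M k t ∧ glue c t = g ∧ gType M ℓ t = τ := by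
      simpa [gType] using hχ
    refine .ex _ (isAtom_guardAtom _ _) ?_ ?_ (isGFex_typeFormula_gType M ℓ ht.isGuardedTup _ _)
    · exact (free_guardAtom k _).symm ▸ free_typeFormula_subset ℓ _ _ _
    · exact (free_guardAtom k _).symm ▸ freshVars_subset_range fr x g

theorem sem_typeFormula_gType (M : GStr Rel ar D) :
    ∀ ℓ {m} (x : Fin m → ℕ) fr, (∀ i, x i < fr) → ∀ v : ℕ → D,
      (typeFormula ℓ (gType M ℓ (v ∘ x)) x fr).sem M v
  | 0, _, x, _, _, v => by
    simp only [typeFormula, GFO.sem_conj, List.forall_mem_map, sem_atomAt]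
    exact fun α h => (Set.mem_toList (s := gType M 0 (v ∘ x))).1 h
  | ℓ + 1, _, x, fr, hx, v => by
    simp only [typeFormula, GFO.sem_conj, List.forall_mem_append, List.forall_mem_map,
      sem_atomAt, Set.mem_toList]
    refine ⟨fun α h => h, fun ⟨k, g, τ⟩ hχ => ?_⟩
    obtain ⟨t, ht, rfl, rfl⟩ : ∃ t, IsGuard M k t ∧ glue (v ∘ x) t = g ∧ gType M ℓ t = τ := hχ
    obtain ⟨w, hwv, hwt⟩ := exists_extension_challengeVars hx v t
    refine ⟨w, hwv, (sem_guardAtom M w k _).2 (by rwa [hwt]), ?_⟩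
    have := sem_typeFormula_gType M ℓ _ _ (challengeVars_lt hx (glue (v ∘ x) t)) w
    rwa [hwt] at this

theorem gSimL_of_sem_typeFormula (M : GStr Rel ar D1) (N : GStr Rel ar D2) :
    ∀ ℓ {m} (c : Fin m → D1) (x : Fin m → ℕ) fr, (∀ i j, x i = x j → c i = c j) →
      (∀ i, x i < fr) → ∀ w : ℕ → D2, (typeFormula ℓ (gType M ℓ c) x fr).sem N w →
      GSimL M N ℓ ⟨m, c, w ∘ x⟩
  | 0, _, c, x, _, _, _, w, h => by
    simp only [typeFormula, gType, GFO.sem_conj, List.forall_mem_map, sem_atomAt,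
      Set.mem_toList] at h
    exact tupHom_of_holdsAt h
  | ℓ + 1, _, c, x, fr, hxc, hx, w, h => by
    simp only [typeFormula, GFO.sem_conj, List.forall_mem_append, List.forall_mem_map,
      sem_atomAt, Set.mem_toList] at h
    have hcw : TupHom M N c (w ∘ x) := tupHom_of_holdsAt h.1
    refine gSimL_succ_of_forall_guard hcw fun k t ht => ?_
    obtain ⟨w', hw'w, hguard, hinner⟩ := h.2 ⟨k, glue c t, gType M ℓ t⟩ ⟨t, ht, rfl, rfl⟩
    refine ⟨w' ∘ challengeVars x fr (glue c t), (sem_guardAtom N w' k _).1 hguard,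
      gSimL_of_sem_typeFormula M N ℓ t _ _ (fun i j => challengeVars_glue_inj hxc hx)
        (challengeVars_lt hx _) w' hinner, fun i j hij => ?_⟩
    obtain ⟨i', hi'⟩ := exists_glue_eq_some hij
    have hvar : challengeVars x fr (glue c t) j = x i' := by simp [challengeVars, hi']
    simp only [Function.comp_apply, hvar, hw'w _ (not_mem_freshVars_of_lt (hx i'))]
    exact hcw.1 i i' (hij.trans (glue_eq_some hi').symm)

end Types

section Backward

variable {M : GStr Rel ar D1} {N : GStr Rel ar D2}

theorem gSimL_of_leGFexDepth [Finite Rel] [Nonempty D2] {ℓ n : ℕ} {a : Fin n → D1}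
    {b : Fin n → D2} (ha : IsGuardedTup M a) (h : leGFexDepth M N ℓ a b) :
    GSimL M N ℓ ⟨n, a, b⟩ := by
  obtain ⟨w, hw⟩ := exists_valuation_extending b
  have hsat : satTup M (typeFormula ℓ (gType M ℓ a) Fin.val n) a := fun v hv => by
    simpa [show v ∘ Fin.val = a from funext hv] using
      sem_typeFormula_gType M ℓ Fin.val n Fin.isLt v
  have hfree : (typeFormula ℓ (gType M ℓ a) Fin.val n).free ⊆ {m | m < n} :=
    (free_typeFormula_subset ℓ _ _ _).trans (Set.range_subset_iff.2 Fin.isLt)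
  have hsem := h _ (isGFex_typeFormula_gType M ℓ ha _ _) (qdepth_typeFormula_le ℓ _ _ _) hfree
    hsat w hw
  simpa [show w ∘ Fin.val = b from funext hw] using gSimL_of_sem_typeFormula M N ℓ a Fin.val n
    (fun i j hij => congrArg a (Fin.ext hij)) Fin.isLt w hsem

theorem exists_forall_of_antitone {β : Type*} [Finite β] {P : ℕ → β → Prop}
    (hP : ∀ b, Antitone (P · b)) (h : ∀ ℓ, ∃ b, P ℓ b) : ∃ b, ∀ ℓ, P ℓ b := by
  by_contra! hne
  choose L hL using hne
  obtain ⟨B, hB⟩ := Finite.bddAbove_range L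
  obtain ⟨b, hb⟩ := h B
  exact hL b (hP b (hB ⟨b, rfl⟩) hb)

theorem gSim_of_forall_gSimL [Finite D2] {n : ℕ} {a : Fin n → D1} {b : Fin n → D2}
    (ha : IsGuardedTup M a) (hb : IsGuardedTup N b) (h : ∀ ℓ, GSimL M N ℓ ⟨n, a, b⟩) :
    GSim M N a b := by
  refine ⟨{q | IsGuardedTup M q.2.1 ∧ IsGuardedTup N q.2.2 ∧ ∀ ℓ, GSimL M N ℓ q},
    fun q ⟨hq₁, hq₂, hq⟩ => ⟨hq₁, hq₂, (hq 0).tupHom, fun m a' ha' => ?_⟩, ha, hb, h⟩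
  obtain ⟨b', hb'⟩ := exists_forall_of_antitone
    (P := fun ℓ b' => IsGuardedTup N b' ∧ GSimL M N ℓ ⟨m, a', b'⟩ ∧
      ∀ i j, q.2.1 i = a' j → q.2.2 i = b' j)
    (fun b' _ _ hℓ ⟨hg, hsim, hag⟩ => ⟨hg, antitone_gSimL hℓ _ hsim, hag⟩)
    (fun ℓ => (hq (ℓ + 1)).2 m a' ha')
  exact ⟨b', ⟨ha', (hb' 0).1, fun ℓ => (hb' ℓ).2.1⟩, (hb' 0).2.2⟩

end Backward

/-- **Ehrenfeucht–Fraïssé game for GF∃.**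
For any finite vocabulary τ, τ-structures `𝔄`, `𝔅` with guarded tuples `ā`, `b̄` of the
same length, and any `ℓ < ω`: `𝔄,ā ≤^ℓ_GF∃ 𝔅,b̄` iff `𝔄,ā ⪯^ℓ_gsim 𝔅,b̄`.  If `𝔄` and
`𝔅` are finite, then `𝔄,ā ≤_GF∃ 𝔅,b̄` iff `𝔄,ā ⪯_gsim 𝔅,b̄`. -/
theorem gfex_ef_game {Rel : Type} {ar : Rel → ℕ} [Fintype Rel]
    {D1 D2 : Type} [Nonempty D1] [Nonempty D2]
    (M : GStr Rel ar D1) (N : GStr Rel ar D2) {n : ℕ}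
    (a : Fin n → D1) (b : Fin n → D2)
    (ha : IsGuardedTup M a) (hb : IsGuardedTup N b) :
    (∀ ℓ : ℕ, leGFexDepth M N ℓ a b ↔ GSimL M N ℓ ⟨n, a, b⟩) ∧
    (Finite D1 → Finite D2 → (leGFex M N a b ↔ GSim M N a b)) := by
  have hdepth (ℓ : ℕ) : leGFexDepth M N ℓ a b ↔ GSimL M N ℓ ⟨n, a, b⟩ :=
    ⟨gSimL_of_leGFexDepth ha, leGFexDepth_of_gSimL⟩
  refine ⟨hdepth, fun _ _ => leGFex_iff_forall_leGFexDepth.trans ⟨fun h => ?_, fun h ℓ => ?_⟩⟩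
  · exact gSim_of_forall_gSimL ha hb fun ℓ => (hdepth ℓ).1 (h ℓ)
  · obtain ⟨Z, hZ, hab⟩ := h
    exact (hdepth ℓ).2 (hZ.gSimL ℓ _ hab)
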